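/- (Nash implicit function theorem) Let (x⁰, y⁰) ∈ ℝ^{n+p}, and let f_1, …, f_p be smooth (C^∞) semialgebraic real-valued functions defined on an open semialgebraic neighborhood of (x⁰, y⁰) in ℝ^{n+p}, such that f_j(x⁰, y⁰) = 0 for j = 1, …, p and the p × p matrix [∂f_j/∂y_i (x⁰, y⁰)] is invertible. Then there exist open semialgebraic neighborhoods U of x⁰ in ℝ^n and V of y⁰ in ℝ^p, and a smooth semialgebraic (Nash) map φ : U → V, such that φ(x⁰) = y⁰ and for every (x, y) ∈ U × V one has: f_1(x,y) = … = f_p(x,y) = 0 if and only if y = φ(x). -/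

import Mathlib

/-!
The inverse function theorem applied to `Φ (x, y) = (x, f (x, y))` gives a smooth implicit
function `φ` near `x₀`; in the sup metric the balls around `x₀` and `y₀` are semialgebraic, and
on `U × V` the graph of `φ` is the zero set `{(x, y) ∈ U × V ∩ W | f (x, y) = 0}`, a finite
intersection of semialgebraic sets.
-/

/-- A basic semialgebraic set: defined by finitely many polynomial strict
inequalities and equalities. -/
def IsBasicSemialgebraic {n : ℕ} (S : Set (Fin n → ℝ)) : Prop :=
  ∃ (s t : ℕ) (f : Fin s → MvPolynomial (Fin n) ℝ) (g : Fin t → MvPolynomial (Fin n) ℝ),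
    S = {x | (∀ i, 0 < MvPolynomial.eval x (f i)) ∧ (∀ j, MvPolynomial.eval x (g j) = 0)}

/-- A semialgebraic subset of `ℝ^n`: a finite union of basic semialgebraic sets. -/
def IsSemialgebraic {n : ℕ} (A : Set (Fin n → ℝ)) : Prop :=
  ∃ (r : ℕ) (S : Fin r → Set (Fin n → ℝ)),
    (∀ i, IsBasicSemialgebraic (S i)) ∧ A = ⋃ i, S i

/-- A map defined on a subset `A ⊆ ℝ^m` with values in `ℝ^n` is semialgebraic if its
graph `{(x, f x) | x ∈ A} ⊆ ℝ^{m+n}` is a semialgebraic set. -/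
def IsSemialgebraicMapOn {m n : ℕ} (A : Set (Fin m → ℝ))
    (f : (Fin m → ℝ) → (Fin n → ℝ)) : Prop :=
  IsSemialgebraic {z : Fin (m + n) → ℝ | ∃ x ∈ A, z = Fin.append x (f x)}

/-- A real-valued function on a subset `A ⊆ ℝ^n` is semialgebraic if its graph
is a semialgebraic subset of `ℝ^{n+1}`. -/
def IsSemialgebraicFunOn {n : ℕ} (A : Set (Fin n → ℝ)) (f : (Fin n → ℝ) → ℝ) : Prop :=
  IsSemialgebraic {z : Fin (n + 1) → ℝ | ∃ x ∈ A, z = Fin.snoc x (f x)}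

theorem Fin.append_inj {α : Type*} {m n : ℕ} {a c : Fin m → α} {b d : Fin n → α} :
    Fin.append a b = Fin.append c d ↔ a = c ∧ b = d := by
  simp only [funext_iff, Fin.forall_fin_add, Fin.append_left, Fin.append_right]

theorem Fin.append_mem_ball_append_iff {α : Type*} [PseudoMetricSpace α] {m n : ℕ}
    {x x₀ : Fin m → α} {y y₀ : Fin n → α} {r : ℝ} (hr : 0 < r) :
    Fin.append x y ∈ Metric.ball (Fin.append x₀ y₀) r ↔
      x ∈ Metric.ball x₀ r ∧ y ∈ Metric.ball y₀ r := by
  simp only [Metric.mem_ball, dist_pi_lt_iff hr, Fin.forall_fin_add, Fin.append_left,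
    Fin.append_right]

namespace IsBasicSemialgebraic

theorem inter {n : ℕ} {A B : Set (Fin n → ℝ)} (hA : IsBasicSemialgebraic A)
    (hB : IsBasicSemialgebraic B) : IsBasicSemialgebraic (A ∩ B) := by
  obtain ⟨s₁, t₁, f₁, g₁, rfl⟩ := hA
  obtain ⟨s₂, t₂, f₂, g₂, rfl⟩ := hB
  refine ⟨s₁ + s₂, t₁ + t₂, Fin.append f₁ f₂, Fin.append g₁ g₂, ?_⟩
  ext x
  simp only [Set.mem_inter_iff, Set.mem_ofPred_eq, Fin.forall_fin_add, Fin.append_left,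
    Fin.append_right]
  tauto

theorem isSemialgebraic {n : ℕ} {S : Set (Fin n → ℝ)} (hS : IsBasicSemialgebraic S) :
    IsSemialgebraic S :=
  ⟨1, fun _ => S, fun _ => hS, (Set.iUnion_const S).symm⟩

end IsBasicSemialgebraic

namespace IsSemialgebraic

theorem inter {n : ℕ} {A B : Set (Fin n → ℝ)} (hA : IsSemialgebraic A)
    (hB : IsSemialgebraic B) : IsSemialgebraic (A ∩ B) := by
  obtain ⟨r₁, S₁, hS₁, rfl⟩ := hA
  obtain ⟨r₂, S₂, hS₂, rfl⟩ := hB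
  refine ⟨r₁ * r₂, fun k => S₁ (finProdFinEquiv.symm k).1 ∩ S₂ (finProdFinEquiv.symm k).2,
    fun k => (hS₁ _).inter (hS₂ _), ?_⟩
  rw [Set.iUnion_inter_iUnion, finProdFinEquiv.symm.surjective.iUnion_comp
    fun k => S₁ k.1 ∩ S₂ k.2, Set.iUnion_prod']

theorem univ {n : ℕ} : IsSemialgebraic (Set.univ : Set (Fin n → ℝ)) :=
  IsBasicSemialgebraic.isSemialgebraic ⟨0, 0, Fin.elim0, Fin.elim0, by simp⟩

theorem iInter {n k : ℕ} {S : Fin k → Set (Fin n → ℝ)} (h : ∀ i, IsSemialgebraic (S i)) :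
    IsSemialgebraic (⋂ i, S i) := by
  induction k with
  | zero => simpa using univ
  | succ k ih =>
    have hsplit : (⋂ i, S i) = S 0 ∩ ⋂ i : Fin k, S i.succ := by
      ext x; simp [Fin.forall_fin_succ]
    rw [hsplit]
    exact (h 0).inter (ih fun i => h i.succ)

theorem preimage_polynomial {M N : ℕ} {S : Set (Fin M → ℝ)} (hS : IsSemialgebraic S)
    (q : Fin M → MvPolynomial (Fin N) ℝ) :
    IsSemialgebraic {x : Fin N → ℝ | (fun i => MvPolynomial.eval x (q i)) ∈ S} := by
  obtain ⟨r, T, hT, rfl⟩ := hS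
  refine ⟨r, fun k => {x | (fun i => MvPolynomial.eval x (q i)) ∈ T k}, fun k => ?_, by
    ext x; simp⟩
  obtain ⟨s, t, f, g, hTk⟩ := hT k
  have heval (P : MvPolynomial (Fin M) ℝ) (x : Fin N → ℝ) :
      MvPolynomial.eval (fun i => MvPolynomial.eval x (q i)) P =
        MvPolynomial.eval x (MvPolynomial.bind₁ q P) :=
    (MvPolynomial.eval₂Hom_bind₁ (RingHom.id ℝ) x q P).symm
  exact ⟨s, t, fun i => MvPolynomial.bind₁ q (f i), fun j => MvPolynomial.bind₁ q (g j), by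
    ext x; simp only [Set.mem_ofPred_eq, hTk, heval]⟩

theorem preimage_comp {M N : ℕ} {S : Set (Fin M → ℝ)} (hS : IsSemialgebraic S)
    (σ : Fin M → Fin N) : IsSemialgebraic {x : Fin N → ℝ | x ∘ σ ∈ S} := by
  simpa [Function.comp_def] using hS.preimage_polynomial fun i => MvPolynomial.X (σ i)

end IsSemialgebraic

theorem IsSemialgebraicFunOn.isSemialgebraic_inter_zeroSet {N : ℕ} {W : Set (Fin N → ℝ)}
    {f : (Fin N → ℝ) → ℝ} (hf : IsSemialgebraicFunOn W f) :
    IsSemialgebraic (W ∩ {z | f z = 0}) := by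
  let q : Fin (N + 1) → MvPolynomial (Fin N) ℝ := Fin.snoc MvPolynomial.X 0
  convert hf.preimage_polynomial q using 1
  ext z
  have hsnoc : (fun i => MvPolynomial.eval z (q i)) =
      (Fin.snoc z 0 : Fin (N + 1) → ℝ) := by
    funext i
    induction i using Fin.lastCases <;> simp [q]
  simp only [Set.mem_inter_iff, Set.mem_ofPred_eq, hsnoc, Fin.snoc_injective2.eq_iff]
  constructor
  · rintro ⟨hz, hfz⟩
    exact ⟨z, hz, rfl, hfz.symm⟩
  · rintro ⟨x, hx, rfl, hfx⟩
    exact ⟨hx, hfx.symm⟩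

/-- `Fin n → ℝ` carries the sup metric, so a ball is cut out by the `2n` inequalities
`|x i - c i| < r`. -/
theorem isSemialgebraic_ball {n : ℕ} (c : Fin n → ℝ) {r : ℝ} (hr : 0 < r) :
    IsSemialgebraic (Metric.ball c r) := by
  rw [ball_pi c hr, Set.univ_pi_eq_iInter]
  refine IsSemialgebraic.iInter fun i => IsBasicSemialgebraic.isSemialgebraic
    ⟨2, 0, ![MvPolynomial.C (c i + r) - MvPolynomial.X i,
      MvPolynomial.X i - MvPolynomial.C (c i - r)], Fin.elim0, ?_⟩
  ext x
  simp [Real.ball_eq_Ioo, Fin.forall_fin_two, sub_pos, and_comm]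

theorem OpenPartialHomeomorph.contDiffOn_symm {𝕜 E F : Type*} [RCLike 𝕜]
    [NormedAddCommGroup E] [NormedSpace 𝕜 E] [CompleteSpace E]
    [NormedAddCommGroup F] [NormedSpace 𝕜 F] {k : WithTop ℕ∞} (e : OpenPartialHomeomorph E F)
    (hderiv : ∀ z ∈ e.source, ∃ e' : E ≃L[𝕜] F, HasFDerivAt e (e' : E →L[𝕜] F) z)
    (hsmooth : ContDiffOn 𝕜 k e e.source) : ContDiffOn 𝕜 k e.symm e.target := by
  intro w hw
  obtain ⟨e', he'⟩ := hderiv _ (e.map_target hw)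
  exact (e.contDiffAt_symm hw he'
    (hsmooth.contDiffAt (e.open_source.mem_nhds (e.map_target hw)))).contDiffWithinAt

theorem ContinuousLinearMap.exists_equiv_of_injective {𝕜 E : Type*} [NontriviallyNormedField 𝕜]
    [CompleteSpace 𝕜] [NormedAddCommGroup E] [NormedSpace 𝕜 E] [FiniteDimensional 𝕜 E]
    {L : E →L[𝕜] E} (hL : Function.Injective L) : ∃ e : E ≃L[𝕜] E, (e : E →L[𝕜] E) = L := by
  have hdet : L.det ≠ 0 :=
    LinearMap.det_eq_zero_iff_ker_ne_bot.not_left.2 (LinearMap.ker_eq_bot.2 hL)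
  exact ⟨L.toContinuousLinearEquivOfDetNeZero hdet, L.coe_toContinuousLinearEquivOfDetNeZero hdet⟩

section ImplicitFunction

variable {n p : ℕ}

/-- The map `(x, y) ↦ (x, f (x, y))`, whose local inverse yields the implicit function. -/
def implicitChart (f : Fin p → (Fin (n + p) → ℝ) → ℝ) (z : Fin (n + p) → ℝ) :
    Fin (n + p) → ℝ :=
  Fin.append (fun i => z (Fin.castAdd p i)) (fun j => f j z)

def implicitChartDeriv (L : Fin p → (Fin (n + p) → ℝ) →L[ℝ] ℝ) :
    (Fin (n + p) → ℝ) →L[ℝ] (Fin (n + p) → ℝ) :=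
  ContinuousLinearMap.pi (Fin.append (fun i => ContinuousLinearMap.proj (Fin.castAdd p i)) L)

theorem hasFDerivAt_implicitChart {f : Fin p → (Fin (n + p) → ℝ) → ℝ}
    {L : Fin p → (Fin (n + p) → ℝ) →L[ℝ] ℝ} {z : Fin (n + p) → ℝ}
    (hf : ∀ j, HasFDerivAt (f j) (L j) z) :
    HasFDerivAt (implicitChart f) (implicitChartDeriv L) z := by
  refine hasFDerivAt_pi'' fun i => ?_
  induction i using Fin.addCases with
  | left i => simpa [implicitChart, implicitChartDeriv] using hasFDerivAt_apply (Fin.castAdd p i) z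
  | right j => simpa [implicitChart, implicitChartDeriv] using hf j

theorem contDiffAt_implicitChart {f : Fin p → (Fin (n + p) → ℝ) → ℝ} {z : Fin (n + p) → ℝ}
    {k : WithTop ℕ∞} (hf : ∀ j, ContDiffAt ℝ k (f j) z) : ContDiffAt ℝ k (implicitChart f) z := by
  refine contDiffAt_pi.2 fun i => ?_
  induction i using Fin.addCases with
  | left i => simpa [implicitChart] using (contDiff_apply ℝ ℝ (Fin.castAdd p i)).contDiffAt
  | right j => simpa [implicitChart] using hf j

/-- A vector `v` in the kernel has vanishing `x`-part, so `L v = A (v ∘ natAdd)` for the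
Jacobian block `A`. -/
theorem injective_implicitChartDeriv {L : Fin p → (Fin (n + p) → ℝ) →L[ℝ] ℝ}
    (hL : (Matrix.of fun j i => L j (Pi.single (Fin.natAdd n i) 1)).det ≠ 0) :
    Function.Injective (implicitChartDeriv L) := by
  refine (injective_iff_map_eq_zero _).2 fun v hv => ?_
  have hx : ∀ i, v (Fin.castAdd p i) = 0 := fun i => by
    simpa [implicitChartDeriv] using congrFun hv (Fin.castAdd p i)
  have hy : ∀ j, L j v = 0 := fun j => by
    simpa [implicitChartDeriv] using congrFun hv (Fin.natAdd n j)
  have hv_eq : v = ∑ i, v (Fin.natAdd n i) • Pi.single (Fin.natAdd n i) 1 := by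
    conv_lhs => rw [← Finset.univ_sum_single v]
    simp only [Fin.sum_univ_add, hx, Pi.single_zero, Finset.sum_const_zero, zero_add]
    exact Finset.sum_congr rfl fun i _ => by rw [← Pi.single_smul', smul_eq_mul, mul_one]
  have hmul : Matrix.mulVec (Matrix.of fun j i => L j (Pi.single (Fin.natAdd n i) 1))
      (fun i => v (Fin.natAdd n i)) = 0 := by
    funext j
    have := hy j
    rw [hv_eq, map_sum] at this
    simpa [Matrix.mulVec, dotProduct, mul_comm] using this
  have hvy := Matrix.eq_zero_of_mulVec_eq_zero hL hmul
  funext i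
  induction i using Fin.addCases with
  | left i => exact hx i
  | right j => exact congrFun hvy j

theorem exists_equiv_hasFDerivAt_implicitChart {W : Set (Fin (n + p) → ℝ)} (hW : IsOpen W)
    {k : WithTop ℕ∞} (hk : k ≠ 0) {f : Fin p → (Fin (n + p) → ℝ) → ℝ}
    (hf : ∀ j, ContDiffOn ℝ k (f j) W) {z : Fin (n + p) → ℝ} (hz : z ∈ W)
    (hjac : (Matrix.of fun j i => fderiv ℝ (f j) z (Pi.single (Fin.natAdd n i) 1)).det ≠ 0) :
    ∃ e : (Fin (n + p) → ℝ) ≃L[ℝ] (Fin (n + p) → ℝ),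
      HasFDerivAt (implicitChart f) (e : (Fin (n + p) → ℝ) →L[ℝ] (Fin (n + p) → ℝ)) z := by
  obtain ⟨e, he⟩ := ContinuousLinearMap.exists_equiv_of_injective
    (injective_implicitChartDeriv hjac)
  refine ⟨e, he ▸ hasFDerivAt_implicitChart fun j => ?_⟩
  exact (((hf j).contDiffAt (hW.mem_nhds hz)).differentiableAt hk).hasFDerivAt

theorem implicitChart_append_eq_append_zero_iff {f : Fin p → (Fin (n + p) → ℝ) → ℝ}
    {x x' : Fin n → ℝ} {y : Fin p → ℝ} :
    implicitChart f (Fin.append x y) = Fin.append x' 0 ↔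
      x = x' ∧ ∀ j, f j (Fin.append x y) = 0 := by
  rw [implicitChart, Fin.append_inj]
  simp only [Fin.append_left, funext_iff, Pi.zero_apply]

theorem isOpen_inter_setOf_jacobian_det_ne_zero {W : Set (Fin (n + p) → ℝ)} (hW : IsOpen W)
    {k : WithTop ℕ∞} (hk : 1 ≤ k) {f : Fin p → (Fin (n + p) → ℝ) → ℝ}
    (hf : ∀ j, ContDiffOn ℝ k (f j) W) :
    IsOpen (W ∩ {z | (Matrix.of fun j i =>
      fderiv ℝ (f j) z (Pi.single (Fin.natAdd n i) 1)).det ≠ 0}) := by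
  have hjac : ContinuousOn (fun z => Matrix.of fun j i =>
      fderiv ℝ (f j) z (Pi.single (Fin.natAdd n i) 1)) W :=
    continuousOn_pi.2 fun j => continuousOn_pi.2 fun i =>
      ((hf j).continuousOn_fderiv_of_isOpen hW hk).clm_apply continuousOn_const
  exact (continuous_id.matrix_det.comp_continuousOn hjac).isOpen_inter_preimage hW isOpen_ne

theorem contDiff_append_zero {k : WithTop ℕ∞} :
    ContDiff ℝ k (fun x : Fin n → ℝ => (Fin.append x 0 : Fin (n + p) → ℝ)) := by
  refine contDiff_pi.2 fun i => ?_
  induction i using Fin.addCases with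
  | left i => simpa using contDiff_apply ℝ ℝ i
  | right j => simpa using contDiff_const

/-- The local inverse of `implicitChart f` is restricted to where the Jacobian block stays
invertible, so that it is `C^k` on its whole target. -/
theorem exists_contDiffOn_implicitFunction {W : Set (Fin (n + p) → ℝ)} (hW : IsOpen W)
    {k : WithTop ℕ∞} (hk : 1 ≤ k) {f : Fin p → (Fin (n + p) → ℝ) → ℝ}
    (hf : ∀ j, ContDiffOn ℝ k (f j) W) {x₀ : Fin n → ℝ} {y₀ : Fin p → ℝ}
    (hmem : Fin.append x₀ y₀ ∈ W) (hzero : ∀ j, f j (Fin.append x₀ y₀) = 0)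
    (hjac : (Matrix.of fun j i =>
      fderiv ℝ (f j) (Fin.append x₀ y₀) (Pi.single (Fin.natAdd n i) 1)).det ≠ 0) :
    ∃ (O : Set (Fin (n + p) → ℝ)) (A : Set (Fin n → ℝ)) (φ : (Fin n → ℝ) → (Fin p → ℝ)),
      IsOpen O ∧ Fin.append x₀ y₀ ∈ O ∧ O ⊆ W ∧ IsOpen A ∧ x₀ ∈ A ∧ φ x₀ = y₀ ∧
      ContDiffOn ℝ k φ A ∧ (∀ x ∈ A, ∀ j, f j (Fin.append x (φ x)) = 0) ∧
      ∀ x y, Fin.append x y ∈ O → (∀ j, f j (Fin.append x y) = 0) → y = φ x := by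
  have hk₀ : k ≠ 0 := (zero_lt_one.trans_le hk).ne'
  set N := W ∩ {z | (Matrix.of fun j i =>
    fderiv ℝ (f j) z (Pi.single (Fin.natAdd n i) 1)).det ≠ 0}
  have hN : IsOpen N := isOpen_inter_setOf_jacobian_det_ne_zero hW hk hf
  have hsmooth : ∀ z ∈ N, ContDiffAt ℝ k (implicitChart f) z := fun z hz =>
    contDiffAt_implicitChart fun j => (hf j).contDiffAt (hW.mem_nhds hz.1)
  have hderiv : ∀ z ∈ N, ∃ e : (Fin (n + p) → ℝ) ≃L[ℝ] (Fin (n + p) → ℝ),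
      HasFDerivAt (implicitChart f) (e : (Fin (n + p) → ℝ) →L[ℝ] (Fin (n + p) → ℝ)) z :=
    fun z hz => exists_equiv_hasFDerivAt_implicitChart hW hk₀ hf hz.1 hz.2
  have hz₀ : Fin.append x₀ y₀ ∈ N := ⟨hmem, hjac⟩
  obtain ⟨e₀, he₀⟩ := hderiv _ hz₀
  let Φ := ((hsmooth _ hz₀).toOpenPartialHomeomorph _ he₀ hk₀).restrOpen N hN
  have hΦsymm : ContDiffOn ℝ k Φ.symm Φ.target :=
    Φ.contDiffOn_symm (fun z hz => hderiv z hz.2) fun z hz => (hsmooth z hz.2).contDiffWithinAt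
  let φ : (Fin n → ℝ) → (Fin p → ℝ) := fun x j => Φ.symm (Fin.append x 0) (Fin.natAdd n j)
  have hsolve : ∀ x, Fin.append x 0 ∈ Φ.target →
      Φ.symm (Fin.append x 0) = Fin.append x (φ x) ∧ ∀ j, f j (Fin.append x (φ x)) = 0 := by
    intro x hx
    obtain ⟨a, b, hab⟩ : ∃ a b, Φ.symm (Fin.append x 0) = Fin.append a b :=
      ⟨_, _, Fin.append_castAdd_natAdd.symm⟩
    have hb : φ x = b := funext fun j => by simp only [φ, hab, Fin.append_right]
    have hinv := Φ.right_inv hx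
    rw [hab] at hinv
    obtain ⟨rfl, hzero⟩ := implicitChart_append_eq_append_zero_iff.1 hinv
    exact ⟨hb ▸ hab, hb ▸ hzero⟩
  have hunique : ∀ x y, Fin.append x y ∈ Φ.source → (∀ j, f j (Fin.append x y) = 0) →
      y = φ x := by
    intro x y hxy hzero
    have hΦ : Φ (Fin.append x y) = Fin.append x 0 :=
      implicitChart_append_eq_append_zero_iff.2 ⟨rfl, hzero⟩
    have hx := (hsolve x (hΦ ▸ Φ.map_source hxy)).1
    rw [← hΦ, Φ.left_inv hxy, Fin.append_inj] at hx
    exact hx.2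
  have hz₀Φ : Fin.append x₀ y₀ ∈ Φ.source :=
    ⟨(hsmooth _ hz₀).mem_toOpenPartialHomeomorph_source he₀ hk₀, hz₀⟩
  have hx₀ : Fin.append x₀ 0 ∈ Φ.target :=
    implicitChart_append_eq_append_zero_iff.2 ⟨rfl, hzero⟩ ▸ Φ.map_source hz₀Φ
  have hφ : ContDiffOn ℝ k φ ((fun x => Fin.append x 0) ⁻¹' Φ.target) := by
    have hlift := hΦsymm.comp contDiff_append_zero.contDiffOn fun x hx => hx
    exact contDiffOn_pi.2 fun j => (contDiff_apply ℝ ℝ (Fin.natAdd n j)).comp_contDiffOn hlift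
  exact ⟨Φ.source, (fun x => Fin.append x 0) ⁻¹' Φ.target, φ, Φ.open_source, hz₀Φ,
    fun z hz => hz.2.1, Φ.open_target.preimage (contDiff_append_zero (k := k)).continuous, hx₀,
    (hunique x₀ y₀ hz₀Φ hzero).symm, hφ, fun x hx => (hsolve x hx).2, hunique⟩

end ImplicitFunction

theorem isSemialgebraicMapOn_of_forall_eq_zero_iff {n p : ℕ} {U : Set (Fin n → ℝ)}
    {V : Set (Fin p → ℝ)} {W : Set (Fin (n + p) → ℝ)} {f : Fin p → (Fin (n + p) → ℝ) → ℝ}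
    {φ : (Fin n → ℝ) → (Fin p → ℝ)} (hU : IsSemialgebraic U) (hV : IsSemialgebraic V)
    (hf : ∀ j, IsSemialgebraicFunOn W (f j)) (hUVW : ∀ x ∈ U, ∀ y ∈ V, Fin.append x y ∈ W)
    (hφ : Set.MapsTo φ U V)
    (hiff : ∀ x ∈ U, ∀ y ∈ V, (∀ j, f j (Fin.append x y) = 0) ↔ y = φ x) :
    IsSemialgebraicMapOn U φ := by
  have hgraph : {z | ∃ x ∈ U, z = Fin.append x (φ x)} =
      {z | z ∘ Fin.castAdd p ∈ U} ∩ ({z | z ∘ Fin.natAdd n ∈ V} ∩ ⋂ j, W ∩ {z | f j z = 0}) := by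
    ext z
    obtain ⟨x, y, rfl⟩ : ∃ x y, z = Fin.append x y := ⟨_, _, Fin.append_castAdd_natAdd.symm⟩
    simp only [Set.mem_ofPred_eq, Set.mem_inter_iff, Set.mem_iInter, Fin.append_inj,
      Function.comp_def, Fin.append_left, Fin.append_right]
    constructor
    · rintro ⟨x, hx, rfl, rfl⟩
      exact ⟨hx, hφ hx, fun j => ⟨hUVW x hx _ (hφ hx), (hiff x hx _ (hφ hx)).2 rfl j⟩⟩
    · rintro ⟨hx, hy, hzero⟩
      exact ⟨x, hx, rfl, (hiff x hx y hy).1 fun j => (hzero j).2⟩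
  unfold IsSemialgebraicMapOn
  rw [hgraph]
  exact (hU.preimage_comp _).inter ((hV.preimage_comp _).inter
    (IsSemialgebraic.iInter fun j => (hf j).isSemialgebraic_inter_zeroSet))

theorem nash_implicit_function_general {n p : ℕ}
    (x0 : Fin n → ℝ) (y0 : Fin p → ℝ)
    (W : Set (Fin (n + p) → ℝ)) (hWopen : IsOpen W)
    (hmem : Fin.append x0 y0 ∈ W)
    (f : Fin p → (Fin (n + p) → ℝ) → ℝ)
    (hsmooth : ∀ j, ContDiffOn ℝ (⊤ : ℕ∞) (f j) W)
    (hsa : ∀ j, IsSemialgebraicFunOn W (f j))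
    (hzero : ∀ j, f j (Fin.append x0 y0) = 0)
    (hjac : (Matrix.of fun (j i : Fin p) =>
        fderiv ℝ (f j) (Fin.append x0 y0) (Pi.single (Fin.natAdd n i) 1)).det ≠ 0) :
    ∃ (U : Set (Fin n → ℝ)) (V : Set (Fin p → ℝ)) (φ : (Fin n → ℝ) → (Fin p → ℝ)),
      IsOpen U ∧ IsSemialgebraic U ∧ x0 ∈ U ∧
      IsOpen V ∧ IsSemialgebraic V ∧ y0 ∈ V ∧
      Set.MapsTo φ U V ∧
      ContDiffOn ℝ (⊤ : ℕ∞) φ U ∧ IsSemialgebraicMapOn U φ ∧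
      φ x0 = y0 ∧
      ∀ x ∈ U, ∀ y ∈ V, ((∀ j, f j (Fin.append x y) = 0) ↔ y = φ x) := by
  obtain ⟨O, A, φ, hO, hz₀O, hOW, hA, hx₀A, hφx₀, hφ, hsolve, hunique⟩ :=
    exists_contDiffOn_implicitFunction hWopen (by exact_mod_cast le_top) hsmooth hmem hzero hjac
  obtain ⟨ε, hε, hεO⟩ := Metric.isOpen_iff.1 hO _ hz₀O
  have hφ_nhds : A ∩ φ ⁻¹' Metric.ball y0 ε ∈ nhds x0 :=
    Filter.inter_mem (hA.mem_nhds hx₀A) ((hφ.continuousOn.continuousAt (hA.mem_nhds hx₀A))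
      |>.preimage_mem_nhds (hφx₀ ▸ Metric.ball_mem_nhds y0 hε))
  obtain ⟨ρ, hρ, hρA⟩ := Metric.mem_nhds_iff.1 hφ_nhds
  set U := Metric.ball x0 (min ρ ε)
  set V := Metric.ball y0 ε
  have hρε : 0 < min ρ ε := lt_min hρ hε
  have hUA : U ⊆ A ∩ φ ⁻¹' V := (Metric.ball_subset_ball (min_le_left _ _)).trans hρA
  have hUVO : ∀ x ∈ U, ∀ y ∈ V, Fin.append x y ∈ O := fun x hx y hy =>
    hεO ((Fin.append_mem_ball_append_iff hε).2 ⟨Metric.ball_subset_ball (min_le_right _ _) hx, hy⟩)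
  have hiff : ∀ x ∈ U, ∀ y ∈ V, (∀ j, f j (Fin.append x y) = 0) ↔ y = φ x := fun x hx y hy =>
    ⟨hunique x y (hUVO x hx y hy), fun h => h ▸ hsolve x (hUA hx).1⟩
  have hmaps : Set.MapsTo φ U V := fun x hx => (hUA hx).2
  exact ⟨U, V, φ, Metric.isOpen_ball, isSemialgebraic_ball x0 hρε, Metric.mem_ball_self hρε,
    Metric.isOpen_ball, isSemialgebraic_ball y0 hε, Metric.mem_ball_self hε, hmaps,
    hφ.mono fun x hx => (hUA hx).1,
    isSemialgebraicMapOn_of_forall_eq_zero_iff (isSemialgebraic_ball x0 hρε)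
      (isSemialgebraic_ball y0 hε) hsa (fun x hx y hy => hOW (hUVO x hx y hy)) hmaps hiff,
    hφx₀, hiff⟩

/-- Nash implicit function theorem: given smooth semialgebraic functions f_1, ..., f_p on an
open semialgebraic neighborhood of (x0, y0) in ℝ^(n+p), vanishing at (x0, y0) and with an
invertible Jacobian in the y-directions, there are open semialgebraic neighborhoods U of x0
and V of y0 and a Nash map φ : U → V with φ x0 = y0 such that on U × V the system
f_1 = ... = f_p = 0 is equivalent to y = φ x. -/
theorem nash_implicit_function {n p : ℕ}
    (x0 : Fin n → ℝ) (y0 : Fin p → ℝ)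
    (W : Set (Fin (n + p) → ℝ)) (hWopen : IsOpen W) (hWsa : IsSemialgebraic W)
    (hmem : Fin.append x0 y0 ∈ W)
    (f : Fin p → (Fin (n + p) → ℝ) → ℝ)
    (hsmooth : ∀ j, ContDiffOn ℝ (⊤ : ℕ∞) (f j) W)
    (hsa : ∀ j, IsSemialgebraicFunOn W (f j))
    (hzero : ∀ j, f j (Fin.append x0 y0) = 0)
    (hjac : (Matrix.of fun (j i : Fin p) =>
        fderiv ℝ (f j) (Fin.append x0 y0) (Pi.single (Fin.natAdd n i) 1)).det ≠ 0) :
    ∃ (U : Set (Fin n → ℝ)) (V : Set (Fin p → ℝ)) (φ : (Fin n → ℝ) → (Fin p → ℝ)),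
      IsOpen U ∧ IsSemialgebraic U ∧ x0 ∈ U ∧
      IsOpen V ∧ IsSemialgebraic V ∧ y0 ∈ V ∧
      Set.MapsTo φ U V ∧
      ContDiffOn ℝ (⊤ : ℕ∞) φ U ∧ IsSemialgebraicMapOn U φ ∧
      φ x0 = y0 ∧
      ∀ x ∈ U, ∀ y ∈ V, ((∀ j, f j (Fin.append x y) = 0) ↔ y = φ x) :=
  nash_implicit_function_general x0 y0 W hWopen hmem f hsmooth hsa hzero hjac
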